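/- Let (X_i)_{i∈ℕ} be an exchangeable sequence of {0,1}-valued random variables with de Finetti measure μ, and (Y_i) the μ-mixture of i.i.d. Bernoulli sequences. Then for every N, the sums S_N = Σ_{i=1}^N X_i and T_N = Σ_{i=1}^N Y_i have the same distribution. -/

import Mathlib

open MeasureTheory Finset

def Exchangeable {Ω : Type*} [MeasurableSpace Ω] (P : Measure Ω) (X : ℕ → Ω → ℝ) : Prop :=
  ∀ (N : ℕ) (σ : Equiv.Perm (Fin N)),
    Measure.map (fun ω (i : Fin N) => X (σ i) ω) P =
      Measure.map (fun ω (i : Fin N) => X i ω) P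

def IsBernoulliMixture {Ω : Type*} [MeasurableSpace Ω] (P : Measure Ω)
    (Y : ℕ → Ω → ℝ) (μ : Measure ℝ) : Prop :=
  ∀ (k : ℕ) (y : Fin k → ℝ), (∀ j, y j = 0 ∨ y j = 1) →
    P {ω | ∀ j : Fin k, Y j.val ω = y j}
      = ENNReal.ofReal (∫ p, ∏ j, (if y j = 1 then p else 1 - p) ∂μ)

/-!
Exchangeability makes `E[∏_{j ∈ t} X_j]` depend only on `#t`, so by the moment condition every
polynomial that is affine in each of `X_0, …, X_{k-1}` has the same expectation as the same
polynomial in a single `p` under `μ`. The indicator of the cylinder `{X_j = y_j, j < k}` is such a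
polynomial, `∏_j (y_j X_j + (1 - y_j)(1 - X_j))`, so `X` is itself the `μ`-mixture of i.i.d.
Bernoulli sequences. The law of `S_N` is a function of the law of the bit vector
`(X_0, …, X_{N-1})`, which is determined by the cylinder probabilities.
-/

theorem Finset.prod_mul_add_eq_sum_powerset {ι R : Type*} [CommSemiring R] [DecidableEq ι]
    (s : Finset ι) (a b x : ι → R) :
    ∏ j ∈ s, (a j * x j + b j)
      = ∑ t ∈ s.powerset, ((∏ j ∈ t, a j) * ∏ j ∈ s \ t, b j) * ∏ j ∈ t, x j := by
  rw [prod_add]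
  refine sum_congr rfl fun t _ => ?_
  rw [prod_mul_distrib]
  ring

namespace Exchangeable

variable {Ω : Type*} [MeasurableSpace Ω] {P : Measure Ω} {X : ℕ → Ω → ℝ}

theorem integral_comp_perm (hX : Exchangeable P X) (hXmeas : ∀ i, Measurable (X i)) {k : ℕ}
    (σ : Equiv.Perm (Fin k)) {g : (Fin k → ℝ) → ℝ} (hg : Measurable g) :
    ∫ ω, g (fun i => X (σ i) ω) ∂P = ∫ ω, g (fun i => X i ω) ∂P := by
  have hmeas (f : Fin k → ℕ) : AEMeasurable (fun ω (i : Fin k) => X (f i) ω) P :=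
    (measurable_pi_lambda _ fun i => hXmeas _).aemeasurable
  have := congrArg (fun m => ∫ v, g v ∂m) (hX k σ)
  simpa [integral_map (hmeas _) hg.aestronglyMeasurable] using this

theorem integral_prod_eq_integral_prod_range (hX : Exchangeable P X)
    (hXmeas : ∀ i, Measurable (X i)) {k : ℕ} (t : Finset (Fin k)) :
    ∫ ω, ∏ j ∈ t, X j ω ∂P = ∫ ω, ∏ i ∈ range #t, X i ω ∂P := by
  set s := univ.map (Fin.castLEEmb (card_le_univ t |>.trans_eq (Fintype.card_fin k)))
  obtain ⟨σ, hσ⟩ := Equiv.Perm.exists_map_finset_eq s t (by simp [s])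
  have hs (ω : Ω) : ∏ j ∈ s, X j ω = ∏ i ∈ range #t, X i ω := by
    simp [s, Fin.prod_univ_eq_prod_range (fun i => X i ω)]
  calc ∫ ω, ∏ j ∈ t, X j ω ∂P = ∫ ω, ∏ j ∈ s, X (σ j) ω ∂P := by simp [← hσ]
    _ = ∫ ω, ∏ j ∈ s, X j ω ∂P :=
      hX.integral_comp_perm hXmeas σ (g := fun v => ∏ j ∈ s, v j)
        (Finset.measurable_prod s fun j _ => measurable_pi_apply j)
    _ = ∫ ω, ∏ i ∈ range #t, X i ω ∂P := by simp only [hs]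

theorem integral_prod_mul_add_eq [IsFiniteMeasure P] (hX : Exchangeable P X)
    (hXmeas : ∀ i, Measurable (X i)) (hXbdd : ∀ i ω, |X i ω| ≤ 1)
    {μ : Measure ℝ} [IsFiniteMeasure μ] (hμbdd : ∀ᵐ p ∂μ, |p| ≤ 1)
    (hμ : ∀ k : ℕ, ∫ p, p ^ k ∂μ = ∫ ω, ∏ i ∈ range k, X i ω ∂P) {k : ℕ} (a b : Fin k → ℝ) :
    ∫ ω, ∏ j, (a j * X j ω + b j) ∂P = ∫ p, ∏ j, (a j * p + b j) ∂μ := by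
  classical
  have hXint (t : Finset (Fin k)) : Integrable (fun ω => ∏ j ∈ t, X j ω) P :=
    .of_bound (Finset.measurable_prod t fun j _ => hXmeas j).aestronglyMeasurable 1 <|
      .of_forall fun ω => by
        rw [Real.norm_eq_abs, abs_prod]
        exact prod_le_one (fun _ _ => abs_nonneg _) fun j _ => hXbdd j ω
  have hμint (n : ℕ) : Integrable (fun p : ℝ => p ^ n) μ :=
    .of_bound (measurable_id.pow_const n).aestronglyMeasurable 1 <| hμbdd.mono fun p hp => by
      rw [Real.norm_eq_abs, abs_pow]
      exact pow_le_one₀ (abs_nonneg p) hp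
  simp_rw [prod_mul_add_eq_sum_powerset, prod_const]
  rw [integral_finsetSum _ fun t _ => (hXint t).const_mul _,
    integral_finsetSum _ fun t _ => (hμint _).const_mul _]
  refine sum_congr rfl fun t _ => ?_
  rw [integral_const_mul, integral_const_mul, hμ, hX.integral_prod_eq_integral_prod_range hXmeas]

end Exchangeable

theorem ite_eq_one_eq_mul_add {y : ℝ} (hy : y = 0 ∨ y = 1) (p : ℝ) :
    (if y = 1 then p else 1 - p) = (2 * y - 1) * p + (1 - y) := by
  rcases hy with rfl | rfl <;> norm_num [neg_add_eq_sub]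

theorem ite_eq_one_eq_ite_eq {x y : ℝ} (hx : x = 0 ∨ x = 1) (hy : y = 0 ∨ y = 1) :
    (if y = 1 then x else 1 - x) = if x = y then 1 else 0 := by
  rcases hx with rfl | rfl <;> rcases hy with rfl | rfl <;> norm_num

theorem Exchangeable.isBernoulliMixture {Ω : Type*} [MeasurableSpace Ω] {P : Measure Ω}
    [IsFiniteMeasure P] {X : ℕ → Ω → ℝ} (hX : Exchangeable P X)
    (hXmeas : ∀ i, Measurable (X i)) (hXval : ∀ i ω, X i ω = 0 ∨ X i ω = 1)
    {μ : Measure ℝ} [IsFiniteMeasure μ] (hμbdd : ∀ᵐ p ∂μ, |p| ≤ 1)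
    (hμ : ∀ k : ℕ, ∫ p, p ^ k ∂μ = ∫ ω, ∏ i ∈ range k, X i ω ∂P) :
    IsBernoulliMixture P X μ := by
  intro k y hy
  set C := {ω | ∀ j : Fin k, X j ω = y j}
  have hC : MeasurableSet C := by
    simp only [C, Set.ofPred_forall]
    exact .iInter fun j => measurableSet_eq_fun (hXmeas j) measurable_const
  have hind (ω : Ω) : ∏ j, ((2 * y j - 1) * X j ω + (1 - y j)) = C.indicator 1 ω := by
    simp_rw [← ite_eq_one_eq_mul_add (hy _), ite_eq_one_eq_ite_eq (hXval _ ω) (hy _),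
      Fintype.prod_boole]
    simp [C, Set.indicator_apply]
  have hXbdd (i : ℕ) (ω : Ω) : |X i ω| ≤ 1 := by rcases hXval i ω with h | h <;> simp [h]
  calc P C = ENNReal.ofReal (P.real C) := (ofReal_measureReal).symm
    _ = ENNReal.ofReal (∫ ω, ∏ j, ((2 * y j - 1) * X j ω + (1 - y j)) ∂P) := by
      simp_rw [hind, integral_indicator_one hC]
    _ = ENNReal.ofReal (∫ p, ∏ j, ((2 * y j - 1) * p + (1 - y j)) ∂μ) := by
      rw [hX.integral_prod_mul_add_eq hXmeas hXbdd hμbdd hμ]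
    _ = ENNReal.ofReal (∫ p, ∏ j, (if y j = 1 then p else 1 - p) ∂μ) := by
      simp_rw [ite_eq_one_eq_mul_add (hy _)]

section ZeroOneSequences

variable {Ω Ω' : Type*}

noncomputable def bits (Z : ℕ → Ω → ℝ) (N : ℕ) (ω : Ω) : Fin N → Bool :=
  fun j => decide (Z j ω = 1)

variable {Z : ℕ → Ω → ℝ}

theorem sum_range_eq_comp_bits (hZval : ∀ i ω, Z i ω = 0 ∨ Z i ω = 1) (N : ℕ) :
    (fun ω => ∑ i ∈ range N, Z i ω)
      = (fun v : Fin N → Bool => ∑ j, ((v j).toNat : ℝ)) ∘ bits Z N := by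
  ext ω
  rw [Function.comp_apply, ← Fin.sum_univ_eq_sum_range]
  refine sum_congr rfl fun j _ => ?_
  rcases hZval j ω with h | h <;> simp [bits, h]

theorem bits_preimage_singleton (hZval : ∀ i ω, Z i ω = 0 ∨ Z i ω = 1) {N : ℕ}
    (v : Fin N → Bool) : bits Z N ⁻¹' {v} = {ω | ∀ j : Fin N, Z j ω = (v j).toNat} := by
  ext ω
  simp only [Set.mem_preimage, Set.mem_singleton_iff, funext_iff]
  refine forall_congr' fun j => ?_
  rcases hZval j ω with h | h <;> cases v j <;> simp [bits, h]

variable [MeasurableSpace Ω] [MeasurableSpace Ω']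

theorem measurable_bits (hZmeas : ∀ i, Measurable (Z i)) (N : ℕ) : Measurable (bits Z N) :=
  measurable_pi_lambda _ fun j => measurable_to_bool <| by
    simpa [bits, Set.preimage] using hZmeas j (measurableSet_singleton 1)

theorem map_sum_range_eq_of_cylinder_eq {P : Measure Ω} {Q : Measure Ω'} {Z' : ℕ → Ω' → ℝ}
    (hZmeas : ∀ i, Measurable (Z i)) (hZval : ∀ i ω, Z i ω = 0 ∨ Z i ω = 1)
    (hZ'meas : ∀ i, Measurable (Z' i)) (hZ'val : ∀ i ω, Z' i ω = 0 ∨ Z' i ω = 1) (N : ℕ)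
    (hcyl : ∀ y : Fin N → ℝ, (∀ j, y j = 0 ∨ y j = 1) →
      P {ω | ∀ j : Fin N, Z j ω = y j} = Q {ω | ∀ j : Fin N, Z' j ω = y j}) :
    Measure.map (fun ω => ∑ i ∈ range N, Z i ω) P
      = Measure.map (fun ω => ∑ i ∈ range N, Z' i ω) Q := by
  have hbits : Measure.map (bits Z N) P = Measure.map (bits Z' N) Q := by
    refine Measure.ext_iff_singleton.mpr fun v => ?_
    rw [Measure.map_apply (measurable_bits hZmeas N) (measurableSet_singleton v),
      Measure.map_apply (measurable_bits hZ'meas N) (measurableSet_singleton v),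
      bits_preimage_singleton hZval, bits_preimage_singleton hZ'val]
    exact hcyl _ fun j => by cases v j <;> simp
  rw [sum_range_eq_comp_bits hZval, sum_range_eq_comp_bits hZ'val,
    ← Measure.map_map (measurable_of_finite _) (measurable_bits hZmeas N),
    ← Measure.map_map (measurable_of_finite _) (measurable_bits hZ'meas N), hbits]

theorem IsBernoulliMixture.map_sum_range_eq {P : Measure Ω} {Q : Measure Ω'}
    {Z' : ℕ → Ω' → ℝ} {μ : Measure ℝ} (hZ : IsBernoulliMixture P Z μ)
    (hZ' : IsBernoulliMixture Q Z' μ) (hZmeas : ∀ i, Measurable (Z i))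
    (hZval : ∀ i ω, Z i ω = 0 ∨ Z i ω = 1) (hZ'meas : ∀ i, Measurable (Z' i))
    (hZ'val : ∀ i ω, Z' i ω = 0 ∨ Z' i ω = 1) (N : ℕ) :
    Measure.map (fun ω => ∑ i ∈ range N, Z i ω) P
      = Measure.map (fun ω => ∑ i ∈ range N, Z' i ω) Q :=
  map_sum_range_eq_of_cylinder_eq hZmeas hZval hZ'meas hZ'val N fun y hy =>
    (hZ N y hy).trans (hZ' N y hy).symm

end ZeroOneSequences

theorem sum_dist_eq_of_deFinetti_general {Ω Ω' : Type*} [MeasurableSpace Ω] [MeasurableSpace Ω']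
    (P : Measure Ω) [IsProbabilityMeasure P] (Q : Measure Ω')
    (X : ℕ → Ω → ℝ) (hXmeas : ∀ i, Measurable (X i))
    (hXval : ∀ i ω, X i ω = 0 ∨ X i ω = 1) (hexch : Exchangeable P X)
    (μ : Measure ℝ) [IsProbabilityMeasure μ] (hsupp : μ (Set.Icc 0 1)ᶜ = 0)
    (hμ : ∀ k : ℕ, ∫ p, p ^ k ∂μ = ∫ ω, ∏ i ∈ Finset.range k, X i ω ∂P)
    (Y : ℕ → Ω' → ℝ) (hYmeas : ∀ i, Measurable (Y i))
    (hYval : ∀ i ω, Y i ω = 0 ∨ Y i ω = 1)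
    (hmix : IsBernoulliMixture Q Y μ) (N : ℕ) :
    Measure.map (fun ω => ∑ i ∈ Finset.range N, X i ω) P
      = Measure.map (fun ω' => ∑ i ∈ Finset.range N, Y i ω') Q := by
  have hμbdd : ∀ᵐ p ∂μ, |p| ≤ 1 :=
    (measure_eq_zero_iff_ae_notMem.mp hsupp).mono fun p hp => by
      rw [Set.notMem_compl_iff] at hp
      exact abs_le.mpr ⟨by linarith [hp.1], hp.2⟩
  exact (hexch.isBernoulliMixture hXmeas hXval hμbdd hμ).map_sum_range_eq hmix
    hXmeas hXval hYmeas hYval N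

/-- with μ the de Finetti measure of X and Y the μ-mixture of
i.i.d. Bernoulli sequences, S_N = Σ_{i<N} X_i and T_N = Σ_{i<N} Y_i have the
same distribution. -/
theorem sum_dist_eq_of_deFinetti {Ω Ω' : Type*} [MeasurableSpace Ω] [MeasurableSpace Ω']
    (P : Measure Ω) [IsProbabilityMeasure P] (Q : Measure Ω') [IsProbabilityMeasure Q]
    (X : ℕ → Ω → ℝ) (hXmeas : ∀ i, Measurable (X i))
    (hXval : ∀ i ω, X i ω = 0 ∨ X i ω = 1) (hexch : Exchangeable P X)
    (μ : Measure ℝ) [IsProbabilityMeasure μ] (hsupp : μ (Set.Icc 0 1)ᶜ = 0)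
    (hμ : ∀ k : ℕ, ∫ p, p ^ k ∂μ = ∫ ω, ∏ i ∈ Finset.range k, X i ω ∂P)
    (Y : ℕ → Ω' → ℝ) (hYmeas : ∀ i, Measurable (Y i))
    (hYval : ∀ i ω, Y i ω = 0 ∨ Y i ω = 1)
    (hmix : IsBernoulliMixture Q Y μ) (N : ℕ) :
    Measure.map (fun ω => ∑ i ∈ Finset.range N, X i ω) P
      = Measure.map (fun ω' => ∑ i ∈ Finset.range N, Y i ω') Q :=
  sum_dist_eq_of_deFinetti_general P Q X hXmeas hXval hexch μ hsupp hμ Y hYmeas hYval hmix N
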